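/- For Hermitian matrices A, B ∈ M_d(ℂ), the minimum over unitaries U ∈ U(d) of Tr[A U B U*] equals ⟨λ_A↓, λ_B↑⟩, the inner product of the decreasingly ordered eigenvalues of A with the increasingly ordered eigenvalues of B. -/

import Mathlib

open Finset Matrix

/-- The increasing rearrangement of a vector. -/
noncomputable def asc {d : ℕ} (v : Fin d → ℝ) : Fin d → ℝ :=
  fun i => v (Tuple.sort v i)

/-- The decreasing rearrangement of a vector. -/
noncomputable def desc {d : ℕ} (v : Fin d → ℝ) : Fin d → ℝ :=
  fun i => asc v i.rev

/-! Diagonalise `A = U_A D_a U_A*` and `B = U_B D_b U_B*`. With `V = U_A* U U_B` one gets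
`Tr[A U B U*] = ∑ i j, a i * b j * ‖V i j‖²`, a linear function of the doubly stochastic
matrix `(‖V i j‖²)`. By Birkhoff's theorem it is minimised at a permutation matrix, where it
equals `∑ i, a i * b (σ i)`, and the rearrangement inequality bounds this below by
`⟨a↓, b↑⟩`. Permutation matrices are unitary, so the bound is attained. -/

section Rearrangement

variable {d : ℕ}

lemma asc_eq_comp (v : Fin d → ℝ) : asc v = v ∘ Tuple.sort v := rfl

lemma desc_eq_comp (v : Fin d → ℝ) : desc v = v ∘ (Fin.revPerm.trans (Tuple.sort v)) := rfl

lemma monotone_asc (v : Fin d → ℝ) : Monotone (asc v) := Tuple.monotone_sort v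

lemma antitone_desc (v : Fin d → ℝ) : Antitone (desc v) :=
  (monotone_asc v).comp_antitone Fin.rev_anti

lemma isLeast_sum_mul_comp_perm (a b : Fin d → ℝ) :
    IsLeast (Set.range fun σ : Equiv.Perm (Fin d) => ∑ i, a i * b (σ i))
      (∑ i, desc a i * asc b i) := by
  set τa := Fin.revPerm.trans (Tuple.sort a)
  set τb := Tuple.sort b
  have reindex : ∀ σ : Equiv.Perm (Fin d),
      ∑ i, a i * b (σ i) = ∑ i, desc a i * asc b ((τa.trans (σ.trans τb.symm)) i) := by
    intro σ
    rw [← τa.sum_comp]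
    simp [desc_eq_comp, asc_eq_comp, τa, τb]
  refine ⟨⟨τa.symm.trans τb, ?_⟩, ?_⟩
  · exact (reindex _).trans (by simp)
  · rintro _ ⟨σ, rfl⟩
    dsimp only
    rw [reindex]
    exact ((antitone_desc a).antivary (monotone_asc b)).sum_mul_le_sum_mul_comp_perm

end Rearrangement

section DoublyStochastic

variable {n : Type*} [DecidableEq n] {𝕜 : Type*} [RCLike 𝕜]

lemma norm_sq_permMatrix (σ : Equiv.Perm n) :
    (of fun i j => ‖σ.permMatrix 𝕜 i j‖ ^ 2) = σ.permMatrix ℝ := by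
  ext i j
  by_cases h : σ i = j <;> simp [Equiv.Perm.permMatrix, PEquiv.toMatrix_apply, h]

variable [Fintype n]

lemma exists_perm_sum_mul_comp_le_dotProduct_mulVec (a b : n → ℝ) {S : Matrix n n ℝ}
    (hS : S ∈ doublyStochastic ℝ n) :
    ∃ σ : Equiv.Perm n, ∑ i, a i * b (σ i) ≤ a ⬝ᵥ S *ᵥ b := by
  let f : Matrix n n ℝ →ₗ[ℝ] ℝ :=
    { toFun := fun S => a ⬝ᵥ S *ᵥ b
      map_add' := fun S T => by simp [add_mulVec, dotProduct_add]
      map_smul' := fun c S => by simp [smul_mulVec, dotProduct_smul] }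
  rw [← SetLike.mem_coe, doublyStochastic_eq_convexHull_permMatrix] at hS
  obtain ⟨_, ⟨σ, rfl⟩, hσ⟩ :=
    (f.concaveOn convex_univ).exists_le_of_mem_convexHull (Set.subset_univ _) hS
  exact ⟨σ, by simpa [f, permMatrix_mulVec, dotProduct] using hσ⟩

lemma permMatrix_mem_unitaryGroup (σ : Equiv.Perm n) :
    σ.permMatrix 𝕜 ∈ unitaryGroup n 𝕜 := by
  rw [mem_unitaryGroup_iff, star_eq_conjTranspose, conjTranspose_permMatrix, ← permMatrix_mul,
    inv_mul_cancel, permMatrix_one]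

lemma norm_sq_mem_doublyStochastic {U : Matrix n n 𝕜} (hU : U ∈ unitaryGroup n 𝕜) :
    (of fun i j => ‖U i j‖ ^ 2) ∈ doublyStochastic ℝ n := by
  have row : ∀ i, ∑ j, ‖U i j‖ ^ 2 = 1 := fun i => by
    have h := congrFun (congrFun (mem_unitaryGroup_iff.mp hU) i) i
    simp only [mul_apply, star_apply, RCLike.star_def, RCLike.mul_conj, one_apply_eq] at h
    exact_mod_cast h
  have col : ∀ j, ∑ i, ‖U i j‖ ^ 2 = 1 := fun j => by
    have h := congrFun (congrFun (mem_unitaryGroup_iff'.mp hU) j) j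
    simp only [mul_apply, star_apply, RCLike.star_def, RCLike.conj_mul, one_apply_eq] at h
    exact_mod_cast h
  rw [mem_doublyStochastic_iff_sum]
  exact ⟨fun i j => sq_nonneg _, row, col⟩

end DoublyStochastic

section Trace

variable {n : Type*} [Fintype n] [DecidableEq n]

lemma trace_conj_mul_conj_mul_star {R : Type*} [CommRing R] [StarRing R]
    {Ua : Matrix n n R} (hUa : Ua ∈ unitaryGroup n R) (Ub X Y U : Matrix n n R) :
    trace (Ua * X * star Ua * U * (Ub * Y * star Ub) * star U)
      = trace (X * (star Ua * U * Ub) * Y * star (star Ua * U * Ub)) := by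
  have h : Ua * X * star Ua * U * (Ub * Y * star Ub) * star U
      = Ua * (X * (star Ua * U * Ub) * Y * star (star Ua * U * Ub)) * star Ua := by
    simp only [star_mul, star_star, Matrix.mul_assoc, mem_unitaryGroup_iff.mp hUa,
      Matrix.mul_one]
  rw [h, trace_mul_cycle, ← Matrix.mul_assoc, mem_unitaryGroup_iff'.mp hUa, Matrix.one_mul]

variable {𝕜 : Type*} [RCLike 𝕜]

lemma trace_diagonal_mul_mul_diagonal_mul_star (a b : n → ℝ) (V : Matrix n n 𝕜) :
    trace (diagonal (RCLike.ofReal ∘ a) * V * diagonal (RCLike.ofReal ∘ b) * star V)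
      = ((a ⬝ᵥ (of fun i j => ‖V i j‖ ^ 2) *ᵥ b : ℝ) : 𝕜) := by
  rw [trace]
  simp only [Matrix.diag_apply, mul_apply (M := diagonal _ * V * diagonal _)]
  simp only [mul_diagonal, diagonal_mul, Function.comp_apply, star_apply, RCLike.star_def,
    dotProduct, mulVec, of_apply, Finset.mul_sum]
  push_cast
  refine Finset.sum_congr rfl fun i _ => Finset.sum_congr rfl fun j _ => ?_
  rw [← RCLike.mul_conj]
  ring

end Trace

theorem stmt18 (d : ℕ) (A B : Matrix (Fin d) (Fin d) ℂ)
    (hA : A.IsHermitian) (hB : B.IsHermitian) :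
    IsLeast {t : ℝ | ∃ U ∈ Matrix.unitaryGroup (Fin d) ℂ,
        (t : ℂ) = Matrix.trace (A * U * B * star U)}
      (∑ i, desc hA.eigenvalues i * asc hB.eigenvalues i) := by
  set Ua : Matrix (Fin d) (Fin d) ℂ := ↑hA.eigenvectorUnitary
  set Ub : Matrix (Fin d) (Fin d) ℂ := ↑hB.eigenvectorUnitary
  have hUa : Ua ∈ unitaryGroup (Fin d) ℂ := hA.eigenvectorUnitary.2
  have hUb : Ub ∈ unitaryGroup (Fin d) ℂ := hB.eigenvectorUnitary.2
  have htrace : ∀ U, trace (A * U * B * star U) = ((hA.eigenvalues ⬝ᵥ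
      (of fun i j => ‖(star Ua * U * Ub) i j‖ ^ 2) *ᵥ hB.eigenvalues : ℝ) : ℂ) := by
    intro U
    conv_lhs => rw [hA.spectral_theorem, hB.spectral_theorem]
    rw [Unitary.conjStarAlgAut_apply, Unitary.conjStarAlgAut_apply,
      trace_conj_mul_conj_mul_star hUa, trace_diagonal_mul_mul_diagonal_mul_star]
    rfl
  obtain ⟨⟨σ, hσ⟩, hmin⟩ := isLeast_sum_mul_comp_perm hA.eigenvalues hB.eigenvalues
  refine ⟨⟨Ua * σ.permMatrix ℂ * star Ub, ?_, ?_⟩, ?_⟩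
  · exact mul_mem (mul_mem hUa (permMatrix_mem_unitaryGroup σ)) (Unitary.star_mem hUb)
  · have hV : star Ua * (Ua * σ.permMatrix ℂ * star Ub) * Ub = σ.permMatrix ℂ := by
      simp only [Matrix.mul_assoc, ← Matrix.mul_assoc (star Ua), mem_unitaryGroup_iff'.mp hUa,
        mem_unitaryGroup_iff'.mp hUb, Matrix.one_mul, Matrix.mul_one]
    rw [htrace, hV, norm_sq_permMatrix, permMatrix_mulVec, ← hσ]
    rfl
  · rintro t ⟨U, hU, ht⟩
    have hV : star Ua * U * Ub ∈ unitaryGroup (Fin d) ℂ :=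
      mul_mem (mul_mem (Unitary.star_mem hUa) hU) hUb
    obtain ⟨τ, hτ⟩ := exists_perm_sum_mul_comp_le_dotProduct_mulVec hA.eigenvalues
      hB.eigenvalues (norm_sq_mem_doublyStochastic hV)
    rw [htrace, Complex.ofReal_inj] at ht
    exact (hmin ⟨τ, rfl⟩).trans (ht ▸ hτ)
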